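/- arXiv:1910.07283 — 2 statements merged into one kernel-verified Lean document; each statement's English description precedes it below -/
import Mathlib

section
/- In any finite weighted graph G, an edge e = (u, v) belongs to some minimum spanning forest of G if and only if there is no path from u to v in G consisting entirely of edges with weight strictly less than w(e). -/
/-! Both directions are exchange arguments. If `e = s(u, v)` lies in a minimum spanning forest `F`,
deleting `e` separates `u` from `v`, so a lighter `u`–`v` path has an edge joining the two sides,
and trading `e` for that edge gives a lighter spanning forest. Conversely, since the lighter edges
do not connect `u` to `v`, the path from `u` to `v` in a minimum spanning forest has an edge of
weight at least `w e`, and trading it for `e` gives a spanning forest that is no heavier. -/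

open SimpleGraph Finset

variable {V : Type*} {W : Type*} [AddCommMonoid W] [LinearOrder W] [IsOrderedAddMonoid W]

/-- The simple graph whose edges are a given finite set of (unordered) pairs. -/
def fromEdges (F : Finset (Sym2 V)) : SimpleGraph V := SimpleGraph.fromEdgeSet ↑F

/-- Two edge sets induce the same connected components (reachability). -/
def SameComponents (E F : Finset (Sym2 V)) : Prop :=
  ∀ a b : V, (fromEdges E).Reachable a b ↔ (fromEdges F).Reachable a b

/-- `F` is a spanning forest of the graph with edge set `E`. -/
def IsSpanningForest (E F : Finset (Sym2 V)) : Prop :=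
  F ⊆ E ∧ (fromEdges F).IsAcyclic ∧ SameComponents E F

/-- `F` is a minimum spanning forest of the graph with edge set `E` and weights `w`. -/
def IsMSF (E : Finset (Sym2 V)) (w : Sym2 V → W) (F : Finset (Sym2 V)) : Prop :=
  IsSpanningForest E F ∧ ∀ F', IsSpanningForest E F' → F.sum w ≤ F'.sum w

/-- `T` is a minimum spanning tree of the (connected) graph with edge set `E`. -/
def IsMST (E : Finset (Sym2 V)) (w : Sym2 V → W) (T : Finset (Sym2 V)) : Prop :=
  IsMSF E w T ∧ (fromEdges T).Connected

namespace SimpleGraph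

variable {G H : SimpleGraph V} {a b x y : V}

theorem reachable_sup_edge_iff :
    (G ⊔ edge a b).Reachable x y ↔
      G.Reachable x y ∨ G.Reachable x a ∧ G.Reachable b y ∨
        G.Reachable x b ∧ G.Reachable a y := by
  have hab : (G ⊔ edge a b).Reachable a b := by
    obtain rfl | hne := eq_or_ne a b
    · rfl
    · exact Adj.reachable (.inr ((edge_adj ..).2 ⟨.inl ⟨rfl, rfl⟩, hne⟩))
  have hle : G ≤ G ⊔ edge a b := le_sup_left
  constructor
  · rintro ⟨p⟩
    induction p with
    | nil => exact .inl .rfl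
    | @cons x c y hxc q ih =>
      rcases hxc with hxc | hxc
      · have hxc := hxc.reachable
        rcases ih with h | ⟨h₁, h₂⟩ | ⟨h₁, h₂⟩
        · exact .inl (hxc.trans h)
        · exact .inr (.inl ⟨hxc.trans h₁, h₂⟩)
        · exact .inr (.inr ⟨hxc.trans h₁, h₂⟩)
      · obtain ⟨⟨rfl, rfl⟩ | ⟨rfl, rfl⟩, -⟩ := (edge_adj ..).1 hxc
        · rcases ih with h | ⟨h₁, h₂⟩ | ⟨-, h₂⟩
          · exact .inr (.inl ⟨.rfl, h⟩)
          · exact .inr (.inl ⟨.rfl, h₂⟩)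
          · exact .inl h₂
        · rcases ih with h | ⟨-, h₂⟩ | ⟨h₁, h₂⟩
          · exact .inr (.inr ⟨.rfl, h⟩)
          · exact .inl h₂
          · exact .inr (.inr ⟨.rfl, h₂⟩)
  · rintro (h | ⟨h₁, h₂⟩ | ⟨h₁, h₂⟩)
    · exact h.mono hle
    · exact (h₁.mono hle).trans (hab.trans (h₂.mono hle))
    · exact (h₁.mono hle).trans (hab.symm.trans (h₂.mono hle))

theorem Reachable.of_sup_edge (hGH : G ≤ H) (hab : H.Reachable a b)
    (h : (G ⊔ edge a b).Reachable x y) : H.Reachable x y := by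
  rcases reachable_sup_edge_iff.1 h with h | ⟨h₁, h₂⟩ | ⟨h₁, h₂⟩
  · exact h.mono hGH
  · exact (h₁.mono hGH).trans (hab.trans (h₂.mono hGH))
  · exact (h₁.mono hGH).trans (hab.symm.trans (h₂.mono hGH))

theorem reachable_sup_edge_eq (hxy : (G ⊔ edge a b).Reachable x y) (hnxy : ¬G.Reachable x y) :
    (G ⊔ edge x y).Reachable = (G ⊔ edge a b).Reachable := by
  have hxy' : (G ⊔ edge x y).Reachable x y :=
    Adj.reachable (.inr ((edge_adj ..).2 ⟨.inl ⟨rfl, rfl⟩, fun h ↦ hnxy (h ▸ .rfl)⟩))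
  have hab : (G ⊔ edge x y).Reachable a b := by
    rcases reachable_sup_edge_iff.1 hxy with h | ⟨h₁, h₂⟩ | ⟨h₁, h₂⟩
    · exact absurd h hnxy
    · exact (h₁.symm.mono le_sup_left).trans (hxy'.trans (h₂.symm.mono le_sup_left))
    · exact (h₂.mono le_sup_left).trans (hxy'.symm.trans (h₁.mono le_sup_left))
  ext p q
  exact ⟨.of_sup_edge le_sup_left hxy, .of_sup_edge le_sup_left hab⟩

theorem Walk.exists_mem_edges_not_reachable (p : H.Walk x y) (hxy : ¬G.Reachable x y) :
    ∃ a b, s(a, b) ∈ p.edges ∧ ¬G.Reachable a b := by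
  obtain ⟨d, hd, hx, hy⟩ := p.exists_boundary_dart {z | G.Reachable x z} .rfl hxy
  exact ⟨d.fst, d.snd, List.mem_map_of_mem hd, fun h ↦ hy (hx.trans h)⟩

theorem IsAcyclic.not_reachable_deleteEdges_of_mem_edges (hG : G.IsAcyclic) {p : G.Walk x y}
    (hp : p.IsPath) (hab : s(a, b) ∈ p.edges) : ¬(G.deleteEdges {s(a, b)}).Reachable x y := by
  classical
  rw [reachable_deleteEdges_iff_exists_walk]
  rintro ⟨q, hq⟩
  have hpq : p = q.toPath :=
    congrArg Subtype.val ((hG.subsingleton_path x y).elim ⟨p, hp⟩ q.toPath)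
  rw [hpq] at hab
  exact hq (q.edges_toPath_subset_edges hab)

end SimpleGraph

section Forests

variable {E F : Finset (Sym2 V)} {a b x y : V}

theorem fromEdges_adj : (fromEdges F).Adj a b ↔ s(a, b) ∈ F ∧ a ≠ b := by
  simp [fromEdges]

theorem fromEdges_mono (h : E ⊆ F) : fromEdges E ≤ fromEdges F :=
  fromEdgeSet_mono (by exact_mod_cast h)

theorem reachable_fromEdges_of_mem (h : s(a, b) ∈ F) : (fromEdges F).Reachable a b := by
  obtain rfl | hab := eq_or_ne a b
  · rfl
  · exact (fromEdges_adj.2 ⟨h, hab⟩).reachable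

theorem fromEdges_insert [DecidableEq V] (F : Finset (Sym2 V)) (a b : V) :
    fromEdges (insert s(a, b) F) = fromEdges F ⊔ edge a b := by
  rw [fromEdges, fromEdges, coe_insert, Set.insert_eq, fromEdgeSet_union, sup_comm, edge]

theorem fromEdges_erase [DecidableEq V] (F : Finset (Sym2 V)) (e : Sym2 V) :
    fromEdges (F.erase e) = (fromEdges F).deleteEdges {e} := by
  simp [fromEdges]

theorem fromEdges_eq_erase_sup_edge [DecidableEq V] (h : s(a, b) ∈ F) :
    fromEdges F = fromEdges (F.erase s(a, b)) ⊔ edge a b := by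
  rw [← fromEdges_insert, insert_erase h]

theorem not_reachable_fromEdges_erase [DecidableEq V] (hF : (fromEdges F).IsAcyclic)
    (h : s(a, b) ∈ F) (hab : a ≠ b) : ¬(fromEdges (F.erase s(a, b))).Reachable a b := by
  rw [fromEdges_erase, ← isBridge_iff]
  exact isAcyclic_iff_forall_isBridge.1 hF (fromEdges_adj.2 ⟨h, hab⟩)

theorem IsSpanningForest.exchange [DecidableEq V] (hF : IsSpanningForest E F) (hab : s(a, b) ∈ F)
    (hxy : s(x, y) ∈ E) (hsep : ¬(fromEdges (F.erase s(a, b))).Reachable x y) :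
    IsSpanningForest E (insert s(x, y) (F.erase s(a, b))) := by
  have hFxy : (fromEdges F).Reachable x y := (hF.2.2 x y).1 (reachable_fromEdges_of_mem hxy)
  rw [fromEdges_eq_erase_sup_edge hab] at hFxy
  refine ⟨insert_subset hxy ((erase_subset _ _).trans hF.1), ?_, fun p q ↦ ?_⟩
  · rw [fromEdges_insert]
    exact (hF.2.1.anti (fromEdges_mono (erase_subset _ _))).sup_edge_of_not_reachable hsep
  · rw [hF.2.2 p q, fromEdges_insert, reachable_sup_edge_eq hFxy hsep,
      ← fromEdges_eq_erase_sup_edge hab]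

theorem exists_isSpanningForest (E : Finset (Sym2 V)) : ∃ F, IsSpanningForest E F := by
  classical
  obtain ⟨F, hF, hmin⟩ := exists_min_image {F ∈ E.powerset | SameComponents E F} card
    ⟨E, mem_filter.2 ⟨mem_powerset_self E, fun _ _ ↦ .rfl⟩⟩
  rw [mem_filter, mem_powerset] at hF
  refine ⟨F, hF.1, isAcyclic_iff_forall_isBridge.2 fun e he ↦ ?_, hF.2⟩
  induction e with | h a b
  by_contra hbr
  rw [isBridge_iff, not_not, ← fromEdges_erase] at hbr
  have hab : s(a, b) ∈ F := (fromEdges_adj.1 he).1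
  have hsame : SameComponents E (F.erase s(a, b)) := fun p q ↦ by
    rw [hF.2 p q, fromEdges_eq_erase_sup_edge hab]
    exact ⟨.of_sup_edge le_rfl hbr, (·.mono le_sup_left)⟩
  exact (card_erase_lt_of_mem hab).not_ge
    (hmin _ (mem_filter.2 ⟨mem_powerset.2 ((erase_subset _ _).trans hF.1), hsame⟩))

end Forests

section Weights

variable {M : Type*} [AddCommMonoid M] [LinearOrder M] {E F : Finset (Sym2 V)} {u v : V}

theorem exists_isMSF (E : Finset (Sym2 V)) (w : Sym2 V → M) : ∃ F, IsMSF E w F := by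
  classical
  obtain ⟨F₀, hF₀⟩ := exists_isSpanningForest E
  obtain ⟨F, hF, hmin⟩ := exists_min_image {F ∈ E.powerset | IsSpanningForest E F} (·.sum w)
    ⟨F₀, mem_filter.2 ⟨mem_powerset.2 hF₀.1, hF₀⟩⟩
  exact ⟨F, (mem_filter.1 hF).2, fun F' hF' ↦
    hmin F' (mem_filter.2 ⟨mem_powerset.2 hF'.1, hF'⟩)⟩

theorem IsMSF.not_reachable_lighter [AddRightStrictMono M] {w : Sym2 V → M} (hF : IsMSF E w F)
    (he : s(u, v) ∈ F) (huv : u ≠ v) :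
    ¬(fromEdges (E.filter fun f ↦ w f < w s(u, v))).Reachable u v := by
  classical
  rintro ⟨p⟩
  obtain ⟨a, b, hp, hab⟩ := p.exists_mem_edges_not_reachable
    (not_reachable_fromEdges_erase hF.1.2.1 he huv)
  obtain ⟨hE, hw⟩ := mem_filter.1 (fromEdges_adj.1 (p.adj_of_mem_edges hp)).1
  have hle := hF.2 _ (hF.1.exchange he hE hab)
  rw [sum_insert (mt reachable_fromEdges_of_mem hab), ← add_sum_erase _ _ he] at hle
  exact (add_lt_add_left hw _).not_ge hle

theorem exists_isMSF_mem_of_not_reachable_lighter [AddRightMono M] (E : Finset (Sym2 V))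
    (w : Sym2 V → M) (he : s(u, v) ∈ E)
    (h : ¬(fromEdges (E.filter fun f ↦ w f < w s(u, v))).Reachable u v) :
    ∃ F, IsMSF E w F ∧ s(u, v) ∈ F := by
  classical
  obtain ⟨F, hF⟩ := exists_isMSF E w
  obtain ⟨p, hp⟩ := ((hF.1.2.2 u v).1 (reachable_fromEdges_of_mem he)).exists_isPath
  obtain ⟨a, b, hpab, hab⟩ := p.exists_mem_edges_not_reachable h
  have habF : s(a, b) ∈ F := (fromEdges_adj.1 (p.adj_of_mem_edges hpab)).1
  have hw : w s(u, v) ≤ w s(a, b) := not_lt.1 fun hlt ↦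
    hab (reachable_fromEdges_of_mem (mem_filter.2 ⟨hF.1.1 habF, hlt⟩))
  have hsep : ¬(fromEdges (F.erase s(a, b))).Reachable u v := by
    rw [fromEdges_erase]
    exact hF.1.2.1.not_reachable_deleteEdges_of_mem_edges hp hpab
  refine ⟨_, ⟨hF.1.exchange habF he hsep, fun F' hF' ↦ le_trans ?_ (hF.2 F' hF')⟩,
    mem_insert_self _ _⟩
  rw [sum_insert (mt reachable_fromEdges_of_mem hsep), ← add_sum_erase _ _ habF]
  exact add_le_add_left hw _

end Weights

theorem msf_edge_characterization_general {V : Type*}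
    (E : Finset (Sym2 V)) (w : Sym2 V → ℝ)
    (u v : V) (huv : u ≠ v) (he : s(u, v) ∈ E) :
    (∃ F : Finset (Sym2 V), IsMSF E w F ∧ s(u, v) ∈ F) ↔
      ¬ (fromEdges (E.filter fun f => w f < w s(u, v))).Reachable u v :=
  ⟨fun ⟨_, hF, heF⟩ ↦ hF.not_reachable_lighter heF huv,
    exists_isMSF_mem_of_not_reachable_lighter E w he⟩

/-- An edge `{u, v}` belongs to some minimum spanning forest iff there is no path from
`u` to `v` using only edges of strictly smaller weight. -/
theorem msf_edge_characterization {V : Type*} [Fintype V] [DecidableEq V]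
    (E : Finset (Sym2 V)) (w : Sym2 V → ℝ)
    (u v : V) (huv : u ≠ v) (he : s(u, v) ∈ E) :
    (∃ F : Finset (Sym2 V), IsMSF E w F ∧ s(u, v) ∈ F) ↔
      ¬ (fromEdges (E.filter fun f => w f < w s(u, v))).Reachable u v :=
  msf_edge_characterization_general E w u v huv he
end

section
/- Let G = (V, E, w) be a finite connected weighted graph and T a minimum spanning tree of G. For every ε, the connected components of the subgraph of T with edges of weight ≤ ε coincide with the connected components of the subgraph of G with edges of weight ≤ ε. -/
/-!
Cycle property: if an edge `uv` of `G` is not in a minimum spanning forest `T`, every edge `f`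
on the path from `u` to `v` in `T` weighs at most `w uv`, for otherwise exchanging `f` for `uv`
gives a lighter spanning forest. Hence the endpoints of every edge of `G` of weight `≤ ε` are
joined in `T` by edges of weight `≤ ε`.
-/

open SimpleGraph Finset

variable {V : Type*} {W : Type*} [AddCommMonoid W] [LinearOrder W] [IsOrderedAddMonoid W]

namespace SimpleGraph

variable {G H : SimpleGraph V} {u v : V} {f : Sym2 V}

lemma reachable_le_of_adj_le_reachable (h : G.Adj ≤ H.Reachable) :
    G.Reachable ≤ H.Reachable := by
  simp only [reachable_eq_reflTransGen] at h ⊢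
  exact Relation.reflTransGen_closed h

lemma reachable_sup_edge_eq_s11 (h : G.Reachable u v) : (G ⊔ edge u v).Reachable = G.Reachable := by
  refine le_antisymm (reachable_le_of_adj_le_reachable fun a b hab => ?_)
    (Reachable.mono' le_sup_left)
  rcases hab with hab | hab
  · exact hab.reachable
  · obtain ⟨⟨rfl, rfl⟩ | ⟨rfl, rfl⟩, -⟩ := (edge_adj ..).mp hab
    exacts [h, h.symm]

lemma reachable_deleteEdges_eq_of_not_isBridge (h : ¬G.IsBridge f) :
    (G.deleteEdges {f}).Reachable = G.Reachable := by
  induction f with | h x y =>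
  rw [isBridge_iff, not_not] at h
  refine le_antisymm (Reachable.mono' (deleteEdges_le _)) ?_
  rw [← reachable_sup_edge_eq_s11 h]
  refine Reachable.mono' fun a b hab => ?_
  by_cases hf : s(a, b) = s(x, y)
  · exact Or.inr ((edge_adj ..).mpr ⟨Sym2.eq_iff.mp hf, hab.ne⟩)
  · exact Or.inl ((deleteEdges_adj ..).mpr ⟨hab, hf⟩)

lemma IsAcyclic.not_reachable_deleteEdges_of_mem_edges_s11 (hG : G.IsAcyclic) {p : G.Walk u v}
    (hp : p.IsPath) (hf : f ∈ p.edges) : ¬(G.deleteEdges {f}).Reachable u v := by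
  refine fun h => h.elim_path fun q => ?_
  have hqp : q.1.mapLe (deleteEdges_le _) = p := Subtype.ext_iff.mp <|
    (hG.subsingleton_path u v).elim ⟨_, q.2.mapLe (deleteEdges_le _)⟩ ⟨p, hp⟩
  rw [← hqp, Walk.edges_mapLe_eq_edges] at hf
  simpa using q.1.edges_subset_edgeSet hf

lemma IsAcyclic.sup_edge_deleteEdges_of_mem_edges (hG : G.IsAcyclic) {p : G.Walk u v}
    (hp : p.IsPath) (hf : f ∈ p.edges) : ((G ⊔ edge u v).deleteEdges {f}).IsAcyclic := by
  rw [deleteEdges_sup]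
  exact ((hG.anti (deleteEdges_le _)).sup_edge_of_not_reachable
    (hG.not_reachable_deleteEdges_of_mem_edges_s11 hp hf)).anti (sup_le_sup_left (deleteEdges_le _) _)

lemma not_isBridge_sup_edge_of_mem_edges (huv : ¬G.Adj u v) {p : G.Walk u v} (hp : p.IsPath)
    (hf : f ∈ p.edges) : ¬(G ⊔ edge u v).IsBridge f := by
  have hne : u ≠ v := by
    rintro rfl
    simp [Walk.isPath_iff_nil.mp hp |>.eq_nil] at hf
  have hvu : (G ⊔ edge u v).Adj v u :=
    Or.inr ((edge_adj ..).mpr ⟨Or.inr ⟨rfl, rfl⟩, hne.symm⟩)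
  have hcycle := Path.cons_isCycle ⟨_, hp.mapLe le_sup_left⟩ hvu <| by
    rw [Walk.edges_mapLe_eq_edges, Sym2.eq_swap]
    exact fun h => huv (p.adj_of_mem_edges h)
  rw [isBridge_iff_forall_cycle_notMem (edgeSet_mono le_sup_left (p.edges_subset_edgeSet hf))]
  exact fun h => h _ hcycle (by simpa [Walk.edges_mapLe_eq_edges] using Or.inr hf)

end SimpleGraph

open SimpleGraph

lemma fromEdges_mono_s11 {F F' : Finset (Sym2 V)} (h : F ⊆ F') : fromEdges F ≤ fromEdges F' :=
  fromEdgeSet_mono (by exact_mod_cast h)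

lemma mem_of_mem_edgeSet_fromEdges {F : Finset (Sym2 V)} {e : Sym2 V}
    (h : e ∈ (fromEdges F).edgeSet) : e ∈ F := by
  simp only [fromEdges, edgeSet_fromEdgeSet, Set.mem_sdiff, Finset.mem_coe] at h
  exact h.1

lemma fromEdges_insert_erase [DecidableEq V] {F : Finset (Sym2 V)} {u v : V} {f : Sym2 V}
    (hf : s(u, v) ≠ f) :
    fromEdges (insert s(u, v) (F.erase f)) = (fromEdges F ⊔ edge u v).deleteEdges {f} := by
  ext a b
  simp only [fromEdges, edge, deleteEdges_adj, sup_adj, fromEdgeSet_adj, Finset.coe_insert,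
    Finset.coe_erase, Set.mem_insert_iff, Set.mem_sdiff, Set.mem_singleton_iff]
  grind

lemma SimpleGraph.Walk.reachable_fromEdges_filter {F : Finset (Sym2 V)} {P : Sym2 V → Prop}
    [DecidablePred P] {u v : V} (p : (fromEdges F).Walk u v) (hP : ∀ e ∈ p.edges, P e) :
    (fromEdges (F.filter P)).Reachable u v :=
  ⟨p.transfer _ fun e he => by
    have := p.edges_subset_edgeSet he
    simp_all [fromEdges]⟩

theorem IsSpanningForest.exchange_s11 [DecidableEq V] {E T : Finset (Sym2 V)}
    (hT : IsSpanningForest E T) {u v : V} (he : s(u, v) ∈ E) (heT : s(u, v) ∉ T)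
    {p : (fromEdges T).Walk u v} (hp : p.IsPath) {f : Sym2 V} (hf : f ∈ p.edges) :
    IsSpanningForest E (insert s(u, v) (T.erase f)) := by
  obtain ⟨hTE, hacyc, hsc⟩ := hT
  have hfT : f ∈ T := mem_of_mem_edgeSet_fromEdges (p.edges_subset_edgeSet hf)
  have huv : ¬(fromEdges T).Adj u v := fun h => heT (mem_of_mem_edgeSet_fromEdges h)
  have hG := fromEdges_insert_erase (F := T) (ne_of_mem_of_not_mem hfT heT).symm
  refine ⟨Finset.insert_subset he ((Finset.erase_subset _ _).trans hTE), ?_, fun a b => ?_⟩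
  · rw [hG]
    exact hacyc.sup_edge_deleteEdges_of_mem_edges hp hf
  · rw [hsc, hG, reachable_deleteEdges_eq_of_not_isBridge
      (not_isBridge_sup_edge_of_mem_edges huv hp hf), reachable_sup_edge_eq_s11 ⟨p⟩]

theorem IsMSF.weight_le_of_mem_edges {W : Type*} [AddCommMonoid W] [LinearOrder W]
    [IsOrderedCancelAddMonoid W] [DecidableEq V] {E T : Finset (Sym2 V)} {w : Sym2 V → W}
    (hT : IsMSF E w T) {u v : V} (he : s(u, v) ∈ E) (heT : s(u, v) ∉ T)
    {p : (fromEdges T).Walk u v} (hp : p.IsPath) {f : Sym2 V} (hf : f ∈ p.edges) :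
    w f ≤ w s(u, v) := by
  have hfT : f ∈ T := mem_of_mem_edgeSet_fromEdges (p.edges_subset_edgeSet hf)
  have hmin := hT.2 _ (hT.1.exchange_s11 he heT hp hf)
  rw [Finset.sum_insert fun h => heT (Finset.mem_of_mem_erase h),
    ← Finset.add_sum_erase T w hfT] at hmin
  exact le_of_add_le_add_right hmin

theorem IsMSF.reachable_filter_weight_le {W : Type*} [AddCommMonoid W] [LinearOrder W]
    [IsOrderedCancelAddMonoid W] [DecidableEq V] {E T : Finset (Sym2 V)} {w : Sym2 V → W}
    (hT : IsMSF E w T) {u v : V} (he : s(u, v) ∈ E) :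
    (fromEdges (T.filter fun e => w e ≤ w s(u, v))).Reachable u v := by
  rcases eq_or_ne u v with rfl | huv
  · exact Reachable.rfl
  by_cases heT : s(u, v) ∈ T
  · exact Adj.reachable (by simp [fromEdges, heT, huv])
  obtain ⟨-, -, hsc⟩ := hT.1
  refine ((hsc u v).mp (Adj.reachable (by simp [fromEdges, he, huv]))).elim_path fun p => ?_
  exact p.1.reachable_fromEdges_filter fun f hf => hT.weight_le_of_mem_edges he heT p.2 hf

theorem mst_threshold_components_general {V : Type*} [DecidableEq V]
    (E : Finset (Sym2 V)) (w : Sym2 V → ℝ)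
    (T : Finset (Sym2 V)) (hT : IsMST E w T) :
    ∀ (ε : ℝ) (a b : V),
      (fromEdges (T.filter fun e => w e ≤ ε)).Reachable a b ↔
        (fromEdges (E.filter fun e => w e ≤ ε)).Reachable a b := by
  obtain ⟨hmsf, -⟩ := hT
  intro ε a b
  refine ⟨Reachable.mono (fromEdges_mono_s11 (Finset.filter_subset_filter _ hmsf.1.1)),
    fun h => reachable_le_of_adj_le_reachable (fun x y hxy => ?_) a b h⟩
  obtain ⟨hxyE, hxyε⟩ : s(x, y) ∈ E ∧ w s(x, y) ≤ ε := by simpa [fromEdges] using hxy.1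
  refine (hmsf.reachable_filter_weight_le hxyE).mono (fromEdges_mono_s11 ?_)
  exact Finset.monotone_filter_right _ fun _ _ => (·.trans hxyε)

/-- A minimum spanning tree preserves the connectivity structure of every threshold
subgraph: for each `ε`, the components of `T` restricted to edges of weight `≤ ε`
coincide with those of `G` restricted to edges of weight `≤ ε`. -/
theorem mst_threshold_components {V : Type*} [Fintype V] [DecidableEq V]
    (E : Finset (Sym2 V)) (w : Sym2 V → ℝ) (hconn : (fromEdges E).Connected)
    (T : Finset (Sym2 V)) (hT : IsMST E w T) :
    ∀ (ε : ℝ) (a b : V),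
      (fromEdges (T.filter fun e => w e ≤ ε)).Reachable a b ↔
        (fromEdges (E.filter fun e => w e ≤ ε)).Reachable a b :=
  mst_threshold_components_general E w T hT
end
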